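/- Let $1 \le N \le n$. For any complex-valued $f \in C_0^\infty(\mathbb{R}^n \setminus \{x'=0\})$, the $L^2$ stability identity holds: $4 \left\| \frac{\log|x'| (x' \cdot \nabla_N f)}{|x'|^{N/2}} \right\|_{L^2(\mathbb{R}^n)}^2 - \left\| \frac{f}{|x'|^{N/2}} \right\|_{L^2(\mathbb{R}^n)}^2 = \left\| \frac{f}{|x'|^{N/2}} + \frac{2 \log|x'| (x' \cdot \nabla_N f)}{|x'|^{N/2}} \right\|_{L^2(\mathbb{R}^n)}^2$. -/

import Mathlib

open MeasureTheory Finset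

noncomputable def pnorm (N n : ℕ) (x : Fin n → ℝ) : ℝ :=
  Real.sqrt (∑ j : Fin n, if (j : ℕ) < N then (x j) ^ 2 else 0)

noncomputable def eul (N n : ℕ) (f : (Fin n → ℝ) → ℂ) : (Fin n → ℝ) → ℂ :=
  fun x => ∑ j : Fin n, if (j : ℕ) < N then (x j : ℂ) * fderiv ℝ f x (Pi.single j 1) else 0

section Aux
variable {N n : ℕ}

/-! ### auxiliary definitions -/

noncomputable def qq (N n : ℕ) (x : Fin n → ℝ) : ℝ :=
  ∑ j : Fin n, if (j : ℕ) < N then (x j) ^ 2 else 0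

def TT (N n : ℕ) : Finset (Fin n) := Finset.univ.filter fun j => (j : ℕ) < N

noncomputable def ww (N n : ℕ) (x : Fin n → ℝ) : ℝ :=
  Real.log (pnorm N n x) / pnorm N n x ^ N

noncomputable def Lq (N n : ℕ) (x : Fin n → ℝ) : (Fin n → ℝ) →L[ℝ] ℝ :=
  ∑ j ∈ TT N n, (2 * x j) • ContinuousLinearMap.proj j

lemma qq_eq_sum (N n : ℕ) : qq N n = fun x => ∑ j ∈ TT N n, (x j)^2 := by
  funext x; rw [qq, TT, Finset.sum_filter]

lemma qq_nonneg (N n : ℕ) (x : Fin n → ℝ) : 0 ≤ qq N n x := by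
  apply Finset.sum_nonneg
  intro j _
  split <;> positivity

lemma pnorm_eq (N n : ℕ) (x : Fin n → ℝ) : pnorm N n x = Real.sqrt (qq N n x) := rfl

lemma pnorm_ne_iff (N n : ℕ) (x : Fin n → ℝ) : pnorm N n x ≠ 0 ↔ 0 < qq N n x := by
  rw [pnorm_eq]
  constructor
  · intro h
    rcases lt_or_eq_of_le (qq_nonneg N n x) with h' | h'
    · exact h'
    · exact absurd (by rw [← h', Real.sqrt_zero]) h
  · intro h
    exact (Real.sqrt_pos.2 h).ne'

lemma pnorm_sq (N n : ℕ) (x : Fin n → ℝ) : pnorm N n x ^ 2 = qq N n x := by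
  rw [pnorm_eq, Real.sq_sqrt (qq_nonneg N n x)]

lemma card_TT (N n : ℕ) (hNn : N ≤ n) : (TT N n).card = N := by
  rw [TT]
  rw [show (Finset.univ.filter fun j : Fin n => (j : ℕ) < N) =
      Finset.map (Fin.castLEEmb hNn) Finset.univ by
    ext j
    simp only [Finset.mem_filter, Finset.mem_univ, true_and, Finset.mem_map, Fin.castLEEmb,
      Finset.mem_univ]
    constructor
    · intro hj
      exact ⟨⟨j, hj⟩, by simp [Fin.castLE, Fin.ext_iff]⟩
    · rintro ⟨k, _, rfl⟩
      simpa [Fin.castLE] using k.2]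
  simp

lemma contDiff_qq (N n : ℕ) : ContDiff ℝ (⊤ : ℕ∞) (qq N n) := by
  rw [qq_eq_sum]
  apply ContDiff.sum
  intro j _
  exact (ContDiff.pow (contDiff_pi.1 contDiff_id j) 2)

lemma continuous_pnorm (N n : ℕ) : Continuous (pnorm N n) := by
  have : pnorm N n = fun x => Real.sqrt (qq N n x) := rfl
  rw [this]
  exact Real.continuous_sqrt.comp (contDiff_qq N n).continuous

/-! ### derivatives -/

lemma hasFDerivAt_qq (x : Fin n → ℝ) : HasFDerivAt (qq N n) (Lq N n x) x := by
  rw [qq_eq_sum, Lq]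
  apply HasFDerivAt.fun_sum
  intro j _
  have h1 : HasFDerivAt (fun y : Fin n → ℝ => y j)
      (ContinuousLinearMap.proj (R := ℝ) (φ := fun _ : Fin n => ℝ) j) x :=
    hasFDerivAt_apply j x
  have h2 := (hasDerivAt_pow 2 (x j)).comp_hasFDerivAt x h1
  simpa [Function.comp_def] using h2

lemma Lq_apply_single (x : Fin n → ℝ) (k : Fin n) :
    Lq N n x (Pi.single k 1) = if (k : ℕ) < N then 2 * x k else 0 := by
  rw [Lq, ContinuousLinearMap.sum_apply]
  have : ∀ j ∈ TT N n, ((2 * x j) • ContinuousLinearMap.proj (R := ℝ)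
      (φ := fun _ : Fin n => ℝ) j) (Pi.single k 1) = if j = k then 2 * x k else 0 := by
    intro j _
    rw [ContinuousLinearMap.smul_apply, ContinuousLinearMap.proj_apply, Pi.single_apply]
    by_cases h : j = k <;> simp [h]
  rw [Finset.sum_congr rfl this, Finset.sum_ite_eq' (TT N n) k (fun _ => 2 * x k)]
  simp [TT]

lemma hasFDerivAt_pnorm (x : Fin n → ℝ) (hx : 0 < qq N n x) :
    HasFDerivAt (pnorm N n) ((1 / (2 * Real.sqrt (qq N n x))) • Lq N n x) x :=
  (Real.hasDerivAt_sqrt hx.ne').comp_hasFDerivAt x (hasFDerivAt_qq x)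

lemma hasFDerivAt_ww (x : Fin n → ℝ) (hx : 0 < qq N n x) :
    HasFDerivAt (ww N n)
      (((((pnorm N n x)⁻¹ * pnorm N n x ^ N -
          Real.log (pnorm N n x) * (N * pnorm N n x ^ (N - 1))) / (pnorm N n x ^ N) ^ 2) *
        (1 / (2 * Real.sqrt (qq N n x)))) • Lq N n x) x := by
  have hp : pnorm N n x ≠ 0 := (pnorm_ne_iff N n x).2 hx
  have hd : HasDerivAt (fun r : ℝ => Real.log r / r ^ N)
      (((pnorm N n x)⁻¹ * pnorm N n x ^ N -
          Real.log (pnorm N n x) * (N * pnorm N n x ^ (N - 1))) / (pnorm N n x ^ N) ^ 2)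
      (pnorm N n x) :=
    (Real.hasDerivAt_log hp).div (hasDerivAt_pow N _) (pow_ne_zero _ hp)
  have h := hd.comp_hasFDerivAt x (hasFDerivAt_pnorm x hx)
  rw [smul_smul] at h
  exact h


/-! ### functions depending on f -/

noncomputable def cc (N n : ℕ) (x : Fin n → ℝ) : ℝ :=
  ((pnorm N n x)⁻¹ * pnorm N n x ^ N -
      Real.log (pnorm N n x) * (N * pnorm N n x ^ (N - 1))) / (pnorm N n x ^ N) ^ 2 *
    (1 / (2 * Real.sqrt (qq N n x)))

noncomputable def uu (n : ℕ) (f : (Fin n → ℝ) → ℂ) (x : Fin n → ℝ) : ℝ :=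
  (f x).re ^ 2 + (f x).im ^ 2

noncomputable def VV (N n : ℕ) (f : (Fin n → ℝ) → ℂ) (j : Fin n) (x : Fin n → ℝ) : ℝ :=
  uu n f x * (x j * ww N n x)

variable {f : (Fin n → ℝ) → ℂ}

lemma hasFDerivAt_uu (hf : ContDiff ℝ (⊤ : ℕ∞) f) (x : Fin n → ℝ) :
    HasFDerivAt (uu n f)
      ((2 * (f x).re) • (Complex.reCLM.comp (fderiv ℝ f x)) +
        (2 * (f x).im) • (Complex.imCLM.comp (fderiv ℝ f x))) x := by
  have hdf : HasFDerivAt f (fderiv ℝ f x) x := (hf.differentiable (by simp) x).hasFDerivAt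
  have hre : HasFDerivAt (fun y => (f y).re) (Complex.reCLM.comp (fderiv ℝ f x)) x :=
    (Complex.reCLM.hasFDerivAt).comp x hdf
  have him : HasFDerivAt (fun y => (f y).im) (Complex.imCLM.comp (fderiv ℝ f x)) x :=
    (Complex.imCLM.hasFDerivAt).comp x hdf
  have h1 := (hasDerivAt_pow 2 ((f x).re)).comp_hasFDerivAt x hre
  have h2 := (hasDerivAt_pow 2 ((f x).im)).comp_hasFDerivAt x him
  have := h1.add h2
  rw [show uu n f = ((fun x => x ^ 2) ∘ fun y => (f y).re) + (fun x => x ^ 2) ∘ fun y => (f y).im from rfl]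
  simpa [pow_one] using this

lemma hasFDerivAt_VV (hf : ContDiff ℝ (⊤ : ℕ∞) f) (x : Fin n → ℝ) (hx : 0 < qq N n x) (j : Fin n) :
    HasFDerivAt (VV N n f j)
      (uu n f x • ((x j) • (cc N n x • Lq N n x) + ww N n x • ContinuousLinearMap.proj j) +
        (x j * ww N n x) •
          ((2 * (f x).re) • (Complex.reCLM.comp (fderiv ℝ f x)) +
            (2 * (f x).im) • (Complex.imCLM.comp (fderiv ℝ f x)))) x := by
  have hw : HasFDerivAt (ww N n) (cc N n x • Lq N n x) x := by
    rw [cc]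
    exact hasFDerivAt_ww x hx
  have hproj : HasFDerivAt (fun y : Fin n → ℝ => y j)
      (ContinuousLinearMap.proj (R := ℝ) (φ := fun _ : Fin n => ℝ) j) x :=
    hasFDerivAt_apply j x
  have hinner := hproj.mul hw
  have := (hasFDerivAt_uu hf x).mul hinner
  exact this

lemma fderiv_VV_single (hf : ContDiff ℝ (⊤ : ℕ∞) f) (x : Fin n → ℝ) (hx : 0 < qq N n x)
    (j : Fin n) (hj : (j : ℕ) < N) :
    fderiv ℝ (VV N n f j) x (Pi.single j 1)
      = uu n f x * (x j * (cc N n x * (2 * x j)) + ww N n x) +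
        (x j * ww N n x) *
          (2 * (f x).re * (fderiv ℝ f x (Pi.single j 1)).re +
            2 * (f x).im * (fderiv ℝ f x (Pi.single j 1)).im) := by
  rw [(hasFDerivAt_VV hf x hx j).fderiv]
  simp only [ContinuousLinearMap.add_apply, ContinuousLinearMap.smul_apply,
    ContinuousLinearMap.comp_apply, ContinuousLinearMap.proj_apply, Complex.reCLM_apply,
    Complex.imCLM_apply, smul_eq_mul, Lq_apply_single, if_pos hj, Pi.single_eq_same]
  ring


noncomputable def sre (N n : ℕ) (f : (Fin n → ℝ) → ℂ) (x : Fin n → ℝ) : ℝ :=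
  (f x).re * (eul N n f x).re + (f x).im * (eul N n f x).im

lemma eul_re (f : (Fin n → ℝ) → ℂ) (x : Fin n → ℝ) :
    (eul N n f x).re = ∑ j ∈ TT N n, x j * (fderiv ℝ f x (Pi.single j 1)).re := by
  rw [eul, Complex.re_sum, TT, Finset.sum_filter]
  congr 1
  funext j
  split
  · rw [Complex.re_ofReal_mul]
  · rw [Complex.zero_re]

lemma eul_im (f : (Fin n → ℝ) → ℂ) (x : Fin n → ℝ) :
    (eul N n f x).im = ∑ j ∈ TT N n, x j * (fderiv ℝ f x (Pi.single j 1)).im := by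
  rw [eul, Complex.im_sum, TT, Finset.sum_filter]
  congr 1
  funext j
  split
  · rw [Complex.im_ofReal_mul]
  · rw [Complex.zero_im]

lemma cc_identity (hN1 : 1 ≤ N) (x : Fin n → ℝ) (hx : 0 < qq N n x) :
    2 * cc N n x * qq N n x + N * ww N n x = 1 / pnorm N n x ^ N := by
  have hp : pnorm N n x ≠ 0 := (pnorm_ne_iff N n x).2 hx
  have hq : qq N n x = pnorm N n x ^ 2 := (pnorm_sq N n x).symm
  have hsq : Real.sqrt (qq N n x) = pnorm N n x := (pnorm_eq N n x).symm
  have ha : pnorm N n x ^ N = pnorm N n x ^ (N - 1) * pnorm N n x := by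
    rw [← pow_succ]
    congr 1
    omega
  have ha' : pnorm N n x ^ (N - 1) ≠ 0 := pow_ne_zero _ hp
  rw [cc, ww, hsq, hq, ha]
  field_simp
  ring

lemma divergence_eq (hf : ContDiff ℝ (⊤ : ℕ∞) f) (hNn : N ≤ n) (hN1 : 1 ≤ N)
    (x : Fin n → ℝ) (hx : 0 < qq N n x) :
    ∑ j ∈ TT N n, fderiv ℝ (VV N n f j) x (Pi.single j 1)
      = (uu n f x + 2 * Real.log (pnorm N n x) * sre N n f x) / pnorm N n x ^ N := by
  have hp : pnorm N n x ≠ 0 := (pnorm_ne_iff N n x).2 hx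
  have hterm : ∀ j ∈ TT N n, fderiv ℝ (VV N n f j) x (Pi.single j 1)
      = uu n f x * (2 * cc N n x) * (x j) ^ 2 + uu n f x * ww N n x +
        (2 * ww N n x) * (x j * ((f x).re * (fderiv ℝ f x (Pi.single j 1)).re +
            (f x).im * (fderiv ℝ f x (Pi.single j 1)).im)) := by
    intro j hj
    have hjN : (j : ℕ) < N := by
      simpa [TT] using hj
    rw [fderiv_VV_single hf x hx j hjN]
    ring
  rw [Finset.sum_congr rfl hterm, Finset.sum_add_distrib, Finset.sum_add_distrib,
    Finset.sum_const, card_TT N n hNn, nsmul_eq_mul]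
  simp only [← Finset.mul_sum]
  have h1 : ∑ j ∈ TT N n, (x j) ^ 2 = qq N n x := by rw [qq_eq_sum]
  have h2 : ∑ j ∈ TT N n, x j * ((f x).re * (fderiv ℝ f x (Pi.single j 1)).re +
      (f x).im * (fderiv ℝ f x (Pi.single j 1)).im) = sre N n f x := by
    rw [sre, eul_re, eul_im, Finset.mul_sum, Finset.mul_sum, ← Finset.sum_add_distrib]
    congr 1
    funext j
    ring
  rw [h1, h2]
  have key := cc_identity hN1 x hx
  have key2 : (2 * cc N n x * qq N n x + ↑N * ww N n x) * pnorm N n x ^ N = 1 := by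
    rw [key]
    field_simp
  have hw : ww N n x * pnorm N n x ^ N = Real.log (pnorm N n x) := by
    rw [ww]
    field_simp
  rw [eq_div_iff (pow_ne_zero N hp)]
  linear_combination uu n f x * key2 + 2 * sre N n f x * hw


lemma lineDeriv_const' {n : ℕ} (c : ℝ) (x v : Fin n → ℝ) :
    lineDeriv ℝ (fun _ : Fin n → ℝ => c) x v = 0 := by
  simp [lineDeriv]

lemma integral_fderiv_single_eq_zero {n : ℕ} (V : (Fin n → ℝ) → ℝ)
    (hV : ContDiff ℝ (⊤ : ℕ∞) V) (hc : HasCompactSupport V) (v : Fin n → ℝ) :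
    ∫ x, fderiv ℝ V x v = 0 := by
  obtain ⟨R, hR, hsub⟩ : ∃ R, 0 < R ∧ tsupport V ⊆ Metric.ball 0 R := by
    obtain ⟨r, hr⟩ := hc.isBounded.subset_ball_lt 0 0
    exact ⟨r, hr.1, hr.2⟩
  set φ : ContDiffBump (0 : Fin n → ℝ) := ⟨R, 2*R, hR, by linarith⟩
  obtain ⟨C, hVlip⟩ := hV.lipschitzWith_of_hasCompactSupport hc (by simp)
  obtain ⟨D, hglip⟩ := (φ.contDiff (n := (⊤ : ℕ∞))).lipschitzWith_of_hasCompactSupport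
    φ.hasCompactSupport (by simp)
  have key := hVlip.integral_lineDeriv_mul_eq (μ := volume) hglip φ.hasCompactSupport v
  have h1 : ∀ x, lineDeriv ℝ V x v * φ x = fderiv ℝ V x v := by
    intro x
    rw [((hV.differentiable (by simp)) x).lineDeriv_eq_fderiv]
    by_cases hx : x ∈ tsupport V
    · rw [φ.one_of_mem_closedBall (Metric.ball_subset_closedBall (hsub hx)), mul_one]
    · have hV0 : V =ᶠ[nhds x] 0 := Filter.eventuallyEq_iff_exists_mem.2
        ⟨(tsupport V)ᶜ, (isClosed_tsupport V).isOpen_compl.mem_nhds hx,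
          fun y hy => image_eq_zero_of_notMem_tsupport hy⟩
      have : fderiv ℝ (0 : (Fin n → ℝ) → ℝ) x = 0 := fderiv_const_apply 0
      rw [hV0.fderiv_eq, this]
      simp
  have h2 : ∀ x, lineDeriv ℝ (φ : (Fin n → ℝ) → ℝ) x (-v) * V x = 0 := by
    intro x
    by_cases hx : x ∈ Metric.ball (0 : Fin n → ℝ) R
    · have hφ1 : (φ : (Fin n → ℝ) → ℝ) =ᶠ[nhds x] (fun _ => 1) :=
        Filter.eventuallyEq_iff_exists_mem.2 ⟨Metric.ball 0 R, Metric.isOpen_ball.mem_nhds hx,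
          fun y hy => φ.one_of_mem_closedBall (Metric.ball_subset_closedBall hy)⟩
      rw [hφ1.lineDeriv_eq, lineDeriv_const', zero_mul]
    · rw [image_eq_zero_of_notMem_tsupport (fun h => hx (hsub h)), mul_zero]
  simp_rw [h1, h2] at key
  simpa using key

lemma fderiv_zero_of_nmem_tsupport {g : (Fin n → ℝ) → ℂ} {x : Fin n → ℝ}
    (hx : x ∉ tsupport g) : fderiv ℝ g x = 0 := by
  have hg0 : g =ᶠ[nhds x] 0 := Filter.eventuallyEq_iff_exists_mem.2
    ⟨(tsupport g)ᶜ, (isClosed_tsupport g).isOpen_compl.mem_nhds hx,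
      fun y hy => image_eq_zero_of_notMem_tsupport hy⟩
  rw [hg0.fderiv_eq]
  exact fderiv_const_apply 0

lemma eul_eq_sum (f : (Fin n → ℝ) → ℂ) : eul N n f =
    fun x => ∑ j ∈ TT N n, ((x j : ℂ) * fderiv ℝ f x (Pi.single j 1)) := by
  funext x
  rw [eul, TT, Finset.sum_filter]

lemma eul_zero_of_nmem_tsupport {x : Fin n → ℝ} (hx : x ∉ tsupport f) :
    eul N n f x = 0 := by
  rw [eul_eq_sum]
  simp [fderiv_zero_of_nmem_tsupport hx]

lemma continuous_eul (hf : ContDiff ℝ (⊤ : ℕ∞) f) : Continuous (eul N n f) := by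
  rw [eul_eq_sum]
  apply continuous_finset_sum
  intro j _
  exact (Complex.continuous_ofReal.comp (continuous_apply j)).mul
    ((hf.continuous_fderiv (by simp)).clm_apply continuous_const)

lemma contDiff_VV (hf : ContDiff ℝ (⊤ : ℕ∞) f)
    (hsupp : tsupport f ⊆ {x | pnorm N n x ≠ 0}) (j : Fin n) :
    ContDiff ℝ (⊤ : ℕ∞) (VV N n f j) := by
  rw [contDiff_iff_contDiffAt]
  intro x
  by_cases hx : pnorm N n x ≠ 0
  · have hq : qq N n x ≠ 0 := ((pnorm_ne_iff N n x).1 hx).ne'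
    have hup : ContDiffAt ℝ (⊤ : ℕ∞) (pnorm N n) x :=
      (Real.contDiffAt_sqrt hq).comp x (contDiff_qq N n).contDiffAt
    have hlog : ContDiffAt ℝ (⊤ : ℕ∞) (fun y => Real.log (pnorm N n y)) x :=
      (Real.contDiffAt_log.2 hx).comp x hup
    have hww : ContDiffAt ℝ (⊤ : ℕ∞) (ww N n) x := hlog.div (hup.pow N) (pow_ne_zero N hx)
    have huu : ContDiffAt ℝ (⊤ : ℕ∞) (uu n f) x :=
      (((Complex.reCLM.contDiff.comp hf).pow 2).add
        ((Complex.imCLM.contDiff.comp hf).pow 2)).contDiffAt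
    exact huu.mul (((contDiff_pi.1 contDiff_id j).contDiffAt).mul hww)
  · push_neg at hx
    have hxs : x ∉ tsupport f := fun h => (hsupp h) hx
    have hev : (0 : (Fin n → ℝ) → ℝ) =ᶠ[nhds x] VV N n f j := by
      filter_upwards [(isClosed_tsupport f).isOpen_compl.mem_nhds hxs] with y hy
      simp [VV, uu, image_eq_zero_of_notMem_tsupport hy]
    exact contDiffAt_const.congr_of_eventuallyEq hev.symm

lemma hasCompactSupport_VV (hcs : HasCompactSupport f) (j : Fin n) :
    HasCompactSupport (VV N n f j) :=
  HasCompactSupport.intro hcs (fun x hx => by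
    simp [VV, uu, image_eq_zero_of_notMem_tsupport hx])

lemma continuous_of_aux (hf : ContDiff ℝ (⊤ : ℕ∞) f)
    (hsupp : tsupport f ⊆ {x | pnorm N n x ≠ 0}) {h : (Fin n → ℝ) → ℝ}
    (h1 : ∀ x, pnorm N n x ≠ 0 → ContinuousAt h x)
    (h2 : ∀ x, x ∉ tsupport f → h x = 0) : Continuous h := by
  rw [continuous_iff_continuousAt]
  intro x
  by_cases hx : pnorm N n x ≠ 0
  · exact h1 x hx
  · push_neg at hx
    have hxs : x ∉ tsupport f := fun hm => (hsupp hm) hx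
    have hev : (fun _ => (0:ℝ)) =ᶠ[nhds x] h := by
      filter_upwards [(isClosed_tsupport f).isOpen_compl.mem_nhds hxs] with y hy
      exact (h2 y hy).symm
    exact continuousAt_const.congr hev

lemma integrable_of_aux (hf : ContDiff ℝ (⊤ : ℕ∞) f) (hcs : HasCompactSupport f)
    (hsupp : tsupport f ⊆ {x | pnorm N n x ≠ 0}) {h : (Fin n → ℝ) → ℝ}
    (h1 : ∀ x, pnorm N n x ≠ 0 → ContinuousAt h x)
    (h2 : ∀ x, x ∉ tsupport f → h x = 0) : Integrable h := by
  apply Continuous.integrable_of_hasCompactSupport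
    (continuous_of_aux hf hsupp h1 h2)
  exact HasCompactSupport.intro hcs h2

lemma norm_sq_complex (z : ℂ) : ‖z‖^2 = z.re^2 + z.im^2 := by
  rw [Complex.sq_norm, Complex.normSq_apply]
  ring

end Aux

/-- $L^2$ stability identity for the critical Sobolev type inequality. -/
theorem stmt7 (n N : ℕ) (hN1 : 1 ≤ N) (hNn : N ≤ n)
    (f : (Fin n → ℝ) → ℂ) (hf : ContDiff ℝ (⊤ : ℕ∞) f) (hcs : HasCompactSupport f)
    (hsupp : tsupport f ⊆ {x | pnorm N n x ≠ 0}) :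
    4 * (∫ x : Fin n → ℝ,
        ‖(Real.log (pnorm N n x) : ℂ) * eul N n f x‖ ^ 2 / (pnorm N n x) ^ (N : ℝ))
      - ∫ x : Fin n → ℝ, ‖f x‖ ^ 2 / (pnorm N n x) ^ (N : ℝ) =
    ∫ x : Fin n → ℝ,
      ‖f x + (2 * Real.log (pnorm N n x) : ℝ) • eul N n f x‖ ^ 2 /
        (pnorm N n x) ^ (N : ℝ) := by
  have hplem : ∀ x : Fin n → ℝ, (pnorm N n x) ^ (N : ℝ) = (pnorm N n x) ^ N :=
    fun x => Real.rpow_natCast _ N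
  simp_rw [hplem]
  -- Integrability of the three basic pieces
  have igI2 : Integrable (fun x => ‖f x‖ ^ 2 / pnorm N n x ^ N) := by
    apply integrable_of_aux hf hcs hsupp
    · intro x hx
      exact ((hf.continuous.norm.pow 2).continuousAt).div
        (((continuous_pnorm N n).pow N).continuousAt) (pow_ne_zero N hx)
    · intro x hx
      simp [image_eq_zero_of_notMem_tsupport hx]
  have igI1 : Integrable
      (fun x => ‖(Real.log (pnorm N n x) : ℂ) * eul N n f x‖ ^ 2 / pnorm N n x ^ N) := by
    apply integrable_of_aux hf hcs hsupp
    · intro x hx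
      have hlogc : ContinuousAt (fun y => Real.log (pnorm N n y)) x :=
        (Real.continuousAt_log hx).comp (continuous_pnorm N n).continuousAt
      have h1 : ContinuousAt (fun y => (Real.log (pnorm N n y) : ℂ) * eul N n f y) x :=
        (Complex.continuous_ofReal.continuousAt.comp hlogc).mul
          (continuous_eul hf).continuousAt
      exact ((h1.norm.pow 2)).div (((continuous_pnorm N n).pow N).continuousAt)
        (pow_ne_zero N hx)
    · intro x hx
      simp [eul_zero_of_nmem_tsupport hx]
  have igD : Integrable (fun x =>
      (uu n f x + 2 * Real.log (pnorm N n x) * sre N n f x) / pnorm N n x ^ N) := by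
    apply integrable_of_aux hf hcs hsupp
    · intro x hx
      have hlogc : ContinuousAt (fun y => Real.log (pnorm N n y)) x :=
        (Real.continuousAt_log hx).comp (continuous_pnorm N n).continuousAt
      have huu : Continuous (uu n f) :=
        ((Complex.continuous_re.comp hf.continuous).pow 2).add
          ((Complex.continuous_im.comp hf.continuous).pow 2)
      have hsre : Continuous (sre N n f) :=
        ((Complex.continuous_re.comp hf.continuous).mul
          (Complex.continuous_re.comp (continuous_eul hf))).add
          ((Complex.continuous_im.comp hf.continuous).mul
            (Complex.continuous_im.comp (continuous_eul hf)))
      exact (huu.continuousAt.add ((continuousAt_const.mul hlogc).mul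
        hsre.continuousAt)).div (((continuous_pnorm N n).pow N).continuousAt)
        (pow_ne_zero N hx)
    · intro x hx
      simp [uu, sre, image_eq_zero_of_notMem_tsupport hx]
  -- the divergence integral vanishes
  have hD0 : ∫ x : Fin n → ℝ,
      (uu n f x + 2 * Real.log (pnorm N n x) * sre N n f x) / pnorm N n x ^ N = 0 := by
    have hpt : ∀ x : Fin n → ℝ,
        (uu n f x + 2 * Real.log (pnorm N n x) * sre N n f x) / pnorm N n x ^ N
          = ∑ j ∈ TT N n, fderiv ℝ (VV N n f j) x (Pi.single j 1) := by
      intro x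
      by_cases hx : pnorm N n x ≠ 0
      · exact (divergence_eq hf hNn hN1 x ((pnorm_ne_iff N n x).1 hx)).symm
      · push_neg at hx
        have hxs : x ∉ tsupport f := fun hm => (hsupp hm) hx
        have hL : ∀ j ∈ TT N n, fderiv ℝ (VV N n f j) x (Pi.single j 1) = 0 := by
          intro j _
          have hev : VV N n f j =ᶠ[nhds x] 0 := by
            filter_upwards [(isClosed_tsupport f).isOpen_compl.mem_nhds hxs] with y hy
            simp [VV, uu, image_eq_zero_of_notMem_tsupport hy]
          rw [hev.fderiv_eq, show fderiv ℝ (0 : (Fin n → ℝ) → ℝ) x = 0 from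
            fderiv_const_apply 0]
          rfl
        rw [Finset.sum_eq_zero hL]
        simp [uu, sre, image_eq_zero_of_notMem_tsupport hxs]
    have hIntV : ∀ j ∈ TT N n,
        Integrable (fun x => fderiv ℝ (VV N n f j) x (Pi.single j 1)) := by
      intro j _
      have hcf : Continuous (fderiv ℝ (VV N n f j)) :=
        (contDiff_VV hf hsupp j).continuous_fderiv (by simp)
      apply Continuous.integrable_of_hasCompactSupport
      · exact hcf.clm_apply continuous_const
      · exact ((hasCompactSupport_VV hcs j).fderiv (𝕜 := ℝ)).comp_left
          (g := fun T : (Fin n → ℝ) →L[ℝ] ℝ => T (Pi.single j 1)) rfl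
    rw [show (fun x : Fin n → ℝ =>
        (uu n f x + 2 * Real.log (pnorm N n x) * sre N n f x) / pnorm N n x ^ N)
        = fun x => ∑ j ∈ TT N n, fderiv ℝ (VV N n f j) x (Pi.single j 1) from funext hpt]
    rw [integral_finset_sum _ hIntV]
    refine Finset.sum_eq_zero fun j _ => ?_
    exact integral_fderiv_single_eq_zero _ (contDiff_VV hf hsupp j)
      (hasCompactSupport_VV hcs j) _
  -- pointwise splitting of the third integrand
  have hI3 : ∀ x : Fin n → ℝ,
      ‖f x + (2 * Real.log (pnorm N n x) : ℝ) • eul N n f x‖ ^ 2 / pnorm N n x ^ N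
        = ‖f x‖ ^ 2 / pnorm N n x ^ N
          + (2 * ((uu n f x + 2 * Real.log (pnorm N n x) * sre N n f x) / pnorm N n x ^ N)
              - 2 * (‖f x‖ ^ 2 / pnorm N n x ^ N))
          + 4 * (‖(Real.log (pnorm N n x) : ℂ) * eul N n f x‖ ^ 2 / pnorm N n x ^ N) := by
    intro x
    have e1 : ‖f x + (2 * Real.log (pnorm N n x) : ℝ) • eul N n f x‖ ^ 2
        = ((f x).re ^ 2 + (f x).im ^ 2)
          + 2 * (2 * Real.log (pnorm N n x)) * sre N n f x
          + (2 * Real.log (pnorm N n x)) ^ 2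
            * ((eul N n f x).re ^ 2 + (eul N n f x).im ^ 2) := by
      rw [norm_sq_complex, sre]
      simp only [Complex.add_re, Complex.add_im, Complex.real_smul, Complex.re_ofReal_mul,
        Complex.im_ofReal_mul]
      ring
    have e2 : ‖(Real.log (pnorm N n x) : ℂ) * eul N n f x‖ ^ 2
        = (Real.log (pnorm N n x)) ^ 2 * ((eul N n f x).re ^ 2 + (eul N n f x).im ^ 2) := by
      rw [norm_mul, mul_pow, Complex.norm_real, Real.norm_eq_abs, sq_abs, norm_sq_complex]
    have e3 : ‖f x‖ ^ 2 = (f x).re ^ 2 + (f x).im ^ 2 := norm_sq_complex _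
    rw [e1, e2, e3, uu]
    simp only [div_eq_mul_inv]
    ring
  rw [show (fun x : Fin n → ℝ =>
      ‖f x + (2 * Real.log (pnorm N n x) : ℝ) • eul N n f x‖ ^ 2 / pnorm N n x ^ N)
      = fun x => ‖f x‖ ^ 2 / pnorm N n x ^ N
          + (2 * ((uu n f x + 2 * Real.log (pnorm N n x) * sre N n f x) / pnorm N n x ^ N)
              - 2 * (‖f x‖ ^ 2 / pnorm N n x ^ N))
          + 4 * (‖(Real.log (pnorm N n x) : ℂ) * eul N n f x‖ ^ 2 / pnorm N n x ^ N)
    from funext hI3]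
  have ig_mid : Integrable (fun x : Fin n → ℝ =>
      2 * ((uu n f x + 2 * Real.log (pnorm N n x) * sre N n f x) / pnorm N n x ^ N)
        - 2 * (‖f x‖ ^ 2 / pnorm N n x ^ N)) := (igD.const_mul 2).sub (igI2.const_mul 2)
  have ig_first : Integrable (fun x : Fin n → ℝ =>
      ‖f x‖ ^ 2 / pnorm N n x ^ N +
        (2 * ((uu n f x + 2 * Real.log (pnorm N n x) * sre N n f x) / pnorm N n x ^ N)
          - 2 * (‖f x‖ ^ 2 / pnorm N n x ^ N))) := igI2.add ig_mid
  have ig_last : Integrable (fun x : Fin n → ℝ =>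
      4 * (‖(Real.log (pnorm N n x) : ℂ) * eul N n f x‖ ^ 2 / pnorm N n x ^ N)) :=
    igI1.const_mul 4
  have igD2 : Integrable (fun x : Fin n → ℝ =>
      2 * ((uu n f x + 2 * Real.log (pnorm N n x) * sre N n f x) / pnorm N n x ^ N)) :=
    igD.const_mul 2
  have igI22 : Integrable (fun x : Fin n → ℝ =>
      2 * (‖f x‖ ^ 2 / pnorm N n x ^ N)) := igI2.const_mul 2
  rw [integral_add ig_first ig_last, integral_add igI2 ig_mid, integral_sub igD2 igI22,
    integral_const_mul, integral_const_mul, integral_const_mul, hD0]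
  ring
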